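/- Let m+1 ≥ r ≥ 2 and let F be an r-graph that either has at most m vertices, or has m+1 vertices one of which has degree 1. Let K be the complete r-graph on [m], and let L be the r-graph obtained from K by duplicating vertex 1 into a new vertex 1' (i.e. adding, for every edge e of K containing 1, the edge (e∖{1}) ∪ {1'}) and adding one further edge e that contains both 1 and 1'. Then L contains a member of ℋ^F_{m+1}. -/

import Mathlib

open Finset
open scoped BigOperators Classical

abbrev HG := Finset (Finset ℕ)

/-- The vertex set of a hypergraph: union of its edges. -/
def hverts (G : HG) : Finset ℕ := G.sup id

/-- `G` is `r`-uniform: every edge has `r` vertices. -/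
def Uniform (r : ℕ) (G : HG) : Prop := ∀ e ∈ G, e.card = r

/-- The pair `{u,v}` is covered in `G`: some edge contains both. -/
def Covered (G : HG) (u v : ℕ) : Prop := ∃ e ∈ G, u ∈ e ∧ v ∈ e

/-- `G` contains a copy of `F`. -/
def IsCopyIn (F G : HG) : Prop :=
  ∃ φ : ℕ → ℕ, Set.InjOn φ (hverts F : Set ℕ) ∧ ∀ e ∈ F, e.image φ ∈ G

/-- The subgraph of `G` induced by `C`. -/
def induced (G : HG) (C : Finset ℕ) : HG := G.filter (fun e => e ⊆ C)

/-- `G` contains a member of the family `ℋ^F_p`: there is a core `C` of `p`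
vertices such that the subgraph induced by `C` contains a copy of `F` and every
pair of vertices of `C` is covered in `G`. -/
def ContainsHFam (F : HG) (p : ℕ) (G : HG) : Prop :=
  ∃ C : Finset ℕ, C.card = p ∧ IsCopyIn F (induced G C) ∧
    ∀ u ∈ C, ∀ v ∈ C, u ≠ v → Covered G u v

/-- Turán number: maximum number of edges of an `r`-graph on vertex set `[n]`
satisfying the "freeness" predicate `P`. -/
noncomputable def exNum (r n : ℕ) (P : HG → Prop) : ℕ :=
  sSup {m : ℕ | ∃ G : HG, Uniform r G ∧ (∀ e ∈ G, e ⊆ Finset.range n) ∧ P G ∧ G.card = m}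

/-- The Lagrangian polynomial `p_G(x) = r! ∑_{e∈G} ∏_{i∈e} x_i`. -/
noncomputable def pPoly (r : ℕ) (G : HG) (x : ℕ → ℝ) : ℝ :=
  (r.factorial : ℝ) * ∑ e ∈ G, ∏ i ∈ e, x i

/-- The Lagrangian `λ(G)`. -/
noncomputable def lagrangian (r : ℕ) (G : HG) : ℝ :=
  sSup {v : ℝ | ∃ x : ℕ → ℝ, (∀ i, 0 ≤ x i) ∧ (∑ i ∈ hverts G, x i) = 1 ∧ v = pPoly r G x}

/-- The Lagrangian density `π_λ(F)`. -/
noncomputable def piLambda (r : ℕ) (F : HG) : ℝ :=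
  sSup {v : ℝ | ∃ G : HG, Uniform r G ∧ ¬ IsCopyIn F G ∧ v = lagrangian r G}

/-- `G` is `m`-partite. -/
def MPartite (m : ℕ) (G : HG) : Prop :=
  ∃ f : ℕ → Fin m, ∀ e ∈ G, ∀ u ∈ e, ∀ v ∈ e, u ≠ v → f u ≠ f v

/-- `ℋ^F_{m+1}` is `m`-stable. -/
def MStable (r m : ℕ) (F : HG) : Prop :=
  ∀ ε : ℝ, 0 < ε → ∃ δ : ℝ, 0 < δ ∧ ∃ n₁ : ℕ, ∀ n : ℕ, n₁ ≤ n →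
    ∀ G : HG, Uniform r G → (∀ e ∈ G, e ⊆ Finset.range n) →
      ¬ ContainsHFam F (m + 1) G →
      ((m.descFactorial r : ℝ) / (m : ℝ) ^ r - δ) * (n.choose r : ℝ) < (G.card : ℝ) →
      ∃ Z : Finset ℕ, (Z.card : ℝ) ≤ ε * n ∧
        MPartite m (G.filter (fun e => Disjoint e Z))

/-- Pairs of vertices of `C` not covered in `F`. -/
def uncovPairs (F : HG) (C : Finset ℕ) : Finset (Finset ℕ) :=
  (C.powersetCard 2).filter (fun s => ¬ ∃ e ∈ F, s ⊆ e)

/-- `H` is an expanded `p`-clique with an embedded `F` (i.e. a copy of `H^F_p`). -/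
def IsExpandedClique (r : ℕ) (F : HG) (p : ℕ) (H : HG) : Prop :=
  ∃ C : Finset ℕ, hverts F ⊆ C ∧ C.card = p ∧
    ∃ B : Finset ℕ → Finset ℕ,
      (∀ s ∈ uncovPairs F C, (B s).card = r - 2 ∧ Disjoint (B s) C) ∧
      (∀ s ∈ uncovPairs F C, ∀ t ∈ uncovPairs F C, s ≠ t → Disjoint (B s) (B t)) ∧
      H = F ∪ (uncovPairs F C).image (fun s => s ∪ B s)

/-- The balanced complete `m`-partite `r`-graph `T_r(n,m)` on vertex set `[n]`,
with parts the residue classes modulo `m`. -/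
def turanGraph (r n m : ℕ) : HG :=
  ((Finset.range n).powersetCard r).filter
    (fun e => ∀ u ∈ e, ∀ v ∈ e, u ≠ v → u % m ≠ v % m)

/-- `F` has a vertex of degree 1. -/
def HasDeg1Vertex (F : HG) : Prop :=
  ∃ v ∈ hverts F, (F.filter (fun e => v ∈ e)).card = 1

/-- `T` is a tree on `k` vertices (a connected 2-graph with `k-1` edges). -/
def IsTreeGraph (T : HG) (k : ℕ) : Prop :=
  Uniform 2 T ∧ (hverts T).card = k ∧ T.card + 1 = k ∧
    ∀ u ∈ hverts T, ∀ v ∈ hverts T,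
      Relation.ReflTransGen (fun a b => ({a, b} : Finset ℕ) ∈ T) u v

/-- The `k`-vertex tree `T` satisfies the Erdős–Sós conjecture:
`ex(n,T) ≤ n(k-2)/2` for all `n`. -/
def SatisfiesES (T : HG) (k : ℕ) : Prop :=
  ∀ n : ℕ, 2 * exNum 2 n (fun G => ¬ IsCopyIn T G) ≤ n * (k - 2)

/-- The function `f_r(x) = (∏_{i=1}^{r-1} (x+i-2)) / (x+r-3)^r`. -/
noncomputable def frf (r : ℕ) (x : ℝ) : ℝ :=
  (∏ i ∈ Finset.Icc 1 (r - 1), (x + (i : ℝ) - 2)) / (x + (r : ℝ) - 3) ^ r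

/-- `M` is the rightmost maximum of `f_r` on `[2,∞)`. -/
def IsRightmostMax (r : ℕ) (M : ℝ) : Prop :=
  2 ≤ M ∧ (∀ y : ℝ, 2 ≤ y → frf r y ≤ frf r M) ∧
    (∀ y : ℝ, 2 ≤ y → frf r y = frf r M → y ≤ M)

/-- `F` is the `(r-2)`-fold enlargement of the 2-graph `T`. -/
def IsEnlargement (r : ℕ) (T F : HG) : Prop :=
  ∃ D : Finset ℕ, D.card = r - 2 ∧ Disjoint D (hverts T) ∧ F = T.image (fun e => e ∪ D)

/-- The link of a vertex `i` in `G`. -/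
def link (G : HG) (i : ℕ) : HG := (G.filter (fun e => i ∈ e)).image (fun e => e.erase i)

/-- `λ_i = ∂p_G(x)/∂x_i = r! ∑_{f ∈ L_G(i)} ∏_{j∈f} x_j`. -/
noncomputable def lamI (r : ℕ) (G : HG) (x : ℕ → ℝ) (i : ℕ) : ℝ :=
  (r.factorial : ℝ) * ∑ f ∈ link G i, ∏ j ∈ f, x j

/-- `G` is a blowup of `L`. -/
def IsBlowup (L G : HG) : Prop :=
  ∃ V : ℕ → Finset ℕ,
    (∀ i ∈ hverts L, ∀ j ∈ hverts L, i ≠ j → Disjoint (V i) (V j)) ∧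
    ∀ e : Finset ℕ, e ∈ G ↔ ∃ f ∈ L, ∃ φ : ℕ → ℕ, (∀ i ∈ f, φ i ∈ V i) ∧ e = f.image φ

/-- `G` contains an `s`-sunflower with kernel `D`. -/
def HasSunflower (G : HG) (D : Finset ℕ) (s : ℕ) : Prop :=
  ∃ S : Finset (Finset ℕ), S ⊆ G ∧ S.card = s ∧ (∀ A ∈ S, D ⊆ A) ∧
    ∀ A ∈ S, ∀ B ∈ S, A ≠ B → A ∩ B = D

/-- `F` covers pairs: every pair of vertices of `F` lies in some edge. -/
def CoversPairs (F : HG) : Prop :=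
  ∀ u ∈ hverts F, ∀ v ∈ hverts F, u ≠ v → Covered F u v

/-- `d(G)`: the maximum average degree among nonempty subgraphs of `G`. -/
noncomputable def maxAvgDeg (G : HG) : ℝ :=
  sSup {v : ℝ | ∃ H : HG, H ⊆ G ∧ H.Nonempty ∧ v = 2 * (H.card : ℝ) / ((hverts H).card : ℝ)}

/-- Symmetrizing `v` to `u`: remove all edges containing `v` and replace them
with `{D ∪ {v} : D ∈ L_G(u)}`. -/
def symmetrize (G : HG) (u v : ℕ) : HG :=
  G.filter (fun e => v ∉ e) ∪ (G.filter (fun e => u ∈ e)).image (fun e => insert v (e.erase u))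

/-- The noncomplete transversals of an `m`-partite `r`-graph `L` with parts `A`. -/
noncomputable def noncompTrans (r m : ℕ) (L : HG) (A : Fin m → Finset ℕ) : Finset (Finset ℕ) :=
  ((Finset.univ.biUnion A).powerset).filter
    (fun S => (∀ i, (S ∩ A i).card = 1) ∧ ∃ e : Finset ℕ, e ⊆ S ∧ e.card = r ∧ e ∉ L)

/-! If `r = m + 1`, the extra edge `e` alone is a core: all of `F` sits on at most `r` vertices,
so every edge of `F` is mapped onto `e`. Otherwise the core is `[1, m+1]`: every `r`-subset of
it not containing both `1` and `m+1` is an edge, which covers every pair except `{1, m+1}`, and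
that pair is covered by `e`. It remains to embed `F` in `[1, m+1]` so that no edge is sent onto
a set containing both `1` and `m+1`: if `F` has at most `m` vertices, avoid `m+1`; otherwise a
vertex `v` of degree one and a vertex `w` outside its edge are never covered together, and we
send `v ↦ m+1`, `w ↦ 1`. -/

lemma mem_hverts {G : HG} {a : ℕ} : a ∈ hverts G ↔ ∃ f ∈ G, a ∈ f := by
  simp [hverts, Finset.mem_sup]

lemma subset_hverts {G : HG} {f : Finset ℕ} (hf : f ∈ G) : f ⊆ hverts G :=
  fun _ ha => mem_hverts.mpr ⟨f, hf, ha⟩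

lemma Covered.mono {G G' : HG} {u v : ℕ} (h : Covered G u v) (hG : G ⊆ G') : Covered G' u v :=
  let ⟨f, hf, hu, hv⟩ := h; ⟨f, hG hf, hu, hv⟩

lemma exists_injOn_mapsTo {α β : Type*} [Nonempty β] (s : Finset α) (t : Finset β)
    (h : s.card ≤ t.card) : ∃ φ : α → β, Set.InjOn φ s ∧ Set.MapsTo φ s t := by
  obtain ⟨φ, hmaps, hinj⟩ := s.finite_toSet.exists_injOn_of_encard_le (t := (t : Set β))
    (by simpa only [Set.encard_coe_eq_coe_finsetCard] using mod_cast h)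
  exact ⟨φ, hinj, hmaps⟩

lemma Set.InjOn.mem_of_mem_image_finset {α β : Type*} [DecidableEq β] {φ : α → β}
    {s t : Finset α} (hinj : Set.InjOn φ s) (hts : t ⊆ s) {x : α} (hx : x ∈ s)
    (h : φ x ∈ t.image φ) : x ∈ t :=
  hinj.mem_of_mem_image (s₁ := t) (mod_cast hts) hx (by rwa [← coe_image])

lemma Set.MapsTo.swap_comp {α β : Type*} [DecidableEq β] {φ : α → β} {s : Set α}
    {t : Set β} (h : Set.MapsTo φ s t) {p q : β} (hp : p ∈ t) (hq : q ∈ t) :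
    Set.MapsTo (Equiv.swap p q ∘ φ) s t := by
  intro x hx
  simp only [Function.comp_apply, Equiv.swap_apply_def]
  split_ifs
  exacts [hq, hp, h hx]

/-- Composing an injection with two transpositions of the target prescribes two values. -/
lemma exists_injOn_mapsTo_of_eq_of_eq {α β : Type*} [DecidableEq β] {s : Finset α}
    {t : Finset β} (h : s.card ≤ t.card) {a b : α} {a' b' : β} (ha : a ∈ s) (hb : b ∈ s)
    (hab : a ≠ b) (ha' : a' ∈ t) (hb' : b' ∈ t) (hab' : a' ≠ b') :
    ∃ φ : α → β, Set.InjOn φ s ∧ Set.MapsTo φ s t ∧ φ a = a' ∧ φ b = b' := by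
  have : Nonempty β := ⟨a'⟩
  obtain ⟨φ, hinj, hmaps⟩ := exists_injOn_mapsTo s t h
  set ψ := Equiv.swap (φ a) a' ∘ φ
  have hψinj : Set.InjOn ψ s := (Equiv.injective _).comp_injOn hinj
  have hψa : ψ a = a' := Equiv.swap_apply_left _ _
  have hψb : ψ b ≠ a' := hψa ▸ fun h => hab (hψinj ha hb h.symm)
  refine ⟨Equiv.swap (ψ b) b' ∘ ψ, (Equiv.injective _).comp_injOn hψinj,
    (hmaps.swap_comp (hmaps ha) ha').swap_comp (hmaps.swap_comp (hmaps ha) ha' hb) hb', ?_,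
    Equiv.swap_apply_left _ _⟩
  simp only [Function.comp_apply, hψa]
  exact Equiv.swap_apply_of_ne_of_ne hψb.symm hab'

lemma isCopyIn_induced_of_injOn {F G : HG} {C : Finset ℕ} {φ : ℕ → ℕ}
    (hinj : Set.InjOn φ (hverts F)) (hmaps : Set.MapsTo φ (hverts F) C)
    (hG : ∀ f ∈ F, f.image φ ∈ G) : IsCopyIn F (induced G C) :=
  ⟨φ, hinj, fun f hf => mem_filter.mpr
    ⟨hG f hf, image_subset_iff.mpr fun _ hx => hmaps (subset_hverts hf hx)⟩⟩

lemma card_image_of_uniform {r : ℕ} {F : HG} (hF : Uniform r F) {φ : ℕ → ℕ}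
    (hinj : Set.InjOn φ (hverts F)) {f : Finset ℕ} (hf : f ∈ F) : (f.image φ).card = r := by
  rw [card_image_of_injOn (hinj.mono (mod_cast subset_hverts hf)), hF f hf]

lemma isCopyIn_induced_of_mem {r : ℕ} {F G : HG} (hF : Uniform r F) {C : Finset ℕ}
    (hC : C ∈ G) (hCr : C.card = r) (hFC : (hverts F).card ≤ r) :
    IsCopyIn F (induced G C) := by
  obtain ⟨φ, hinj, hmaps⟩ := exists_injOn_mapsTo (hverts F) C (hCr ▸ hFC)
  refine isCopyIn_induced_of_injOn hinj hmaps fun f hf => ?_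
  have himage : f.image φ ⊆ C := image_subset_iff.mpr fun _ hx => hmaps (subset_hverts hf hx)
  rwa [eq_of_subset_of_card_le himage (by rw [card_image_of_uniform hF hinj hf, hCr])]

lemma exists_not_covered_of_hasDeg1Vertex {r : ℕ} {F : HG} (hF : Uniform r F)
    (hcard : r < (hverts F).card) (hdeg : HasDeg1Vertex F) :
    ∃ v ∈ hverts F, ∃ w ∈ hverts F, v ≠ w ∧ ¬ Covered F v w := by
  obtain ⟨v, hv, hdeg⟩ := hdeg
  obtain ⟨f₀, hf₀⟩ := card_eq_one.mp hdeg
  have hf₀F : f₀ ∈ F ∧ v ∈ f₀ := mem_filter.mp (hf₀ ▸ mem_singleton_self f₀)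
  obtain ⟨w, hwF, hwf₀⟩ : ∃ w ∈ hverts F, w ∉ f₀ :=
    not_subset.mp fun h => (card_le_card h).not_gt (hF f₀ hf₀F.1 ▸ hcard)
  refine ⟨v, hv, w, hwF, fun hvw => hwf₀ (hvw ▸ hf₀F.2), ?_⟩
  rintro ⟨f, hf, hvf, hwf⟩
  have : f ∈ F.filter (fun g => v ∈ g) := mem_filter.mpr ⟨hf, hvf⟩
  rw [hf₀, mem_singleton] at this
  exact hwf₀ (this ▸ hwf)

def dupClique (m r : ℕ) : HG :=
  (Icc 1 m).powersetCard r ∪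
    ((Icc 1 m).powersetCard r |>.filter (fun f => 1 ∈ f)).image
      (fun f => insert (m + 1) (f.erase 1))

section dupClique

variable {m r : ℕ}

lemma mem_dupClique {f : Finset ℕ} (hf : f ⊆ Icc 1 (m + 1)) (hcard : f.card = r)
    (hf1 : ¬ (1 ∈ f ∧ m + 1 ∈ f)) : f ∈ dupClique m r := by
  by_cases hm : m + 1 ∈ f
  · have h1 : 1 ∉ f := fun h => hf1 ⟨h, hm⟩
    have h1' : 1 ∉ f.erase (m + 1) := fun h => h1 (mem_of_mem_erase h)
    have hm1 : m + 1 ≠ 1 := fun h => h1 (h ▸ hm)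
    refine mem_union_right _ (mem_image.mpr ⟨insert 1 (f.erase (m + 1)), ?_, ?_⟩)
    · refine mem_filter.mpr ⟨mem_powersetCard.mpr ⟨?_, ?_⟩, mem_insert_self _ _⟩
      · refine insert_subset (by simp; omega) fun x hx => ?_
        have := mem_Icc.mp (hf (mem_of_mem_erase hx))
        have := ne_of_mem_erase hx
        exact mem_Icc.mpr (by omega)
      · rw [card_insert_of_notMem h1', card_erase_of_mem hm, hcard]
        have : 0 < f.card := card_pos.mpr ⟨_, hm⟩
        omega
    · rw [erase_insert h1', insert_erase hm]
  · refine mem_union_left _ (mem_powersetCard.mpr ⟨fun x hx => ?_, hcard⟩)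
    have := mem_Icc.mp (hf hx)
    exact mem_Icc.mpr ⟨this.1, by have := ne_of_mem_of_not_mem hx hm; omega⟩

lemma covered_dupClique (hr : 2 ≤ r) (hrm : r ≤ m) {x u v : ℕ} (hx : x = 1 ∨ x = m + 1)
    (hu : u ∈ (Icc 1 (m + 1)).erase x) (hv : v ∈ (Icc 1 (m + 1)).erase x) :
    Covered (dupClique m r) u v := by
  have hxI : x ∈ Icc 1 (m + 1) := mem_Icc.mpr (by omega)
  obtain ⟨f, huvf, hf, hcard⟩ := exists_subsuperset_card_eq
    (insert_subset hu (singleton_subset_iff.mpr hv)) (card_le_two.trans hr)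
    (by rw [card_erase_of_mem hxI, Nat.card_Icc]; omega)
  refine ⟨f, mem_dupClique (hf.trans (erase_subset _ _)) hcard ?_, huvf (mem_insert_self _ _),
    huvf (mem_insert_of_mem (mem_singleton_self _))⟩
  rintro ⟨h1, hm⟩
  exact notMem_erase x _ (hf (by rcases hx with rfl | rfl <;> assumption))

lemma covered_dupClique_union (hr : 2 ≤ r) (hrm : r ≤ m) {e : Finset ℕ} (h1 : 1 ∈ e)
    (h1' : m + 1 ∈ e) {u v : ℕ} (hu : u ∈ Icc 1 (m + 1)) (hv : v ∈ Icc 1 (m + 1))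
    (huv : u ≠ v) : Covered (dupClique m r ∪ {e}) u v := by
  have hmono : dupClique m r ⊆ dupClique m r ∪ {e} := subset_union_left
  by_cases hm : u ≠ m + 1 ∧ v ≠ m + 1
  · exact (covered_dupClique hr hrm (Or.inr rfl) (mem_erase.mpr ⟨hm.1, hu⟩)
      (mem_erase.mpr ⟨hm.2, hv⟩)).mono hmono
  by_cases h1 : u ≠ 1 ∧ v ≠ 1
  · exact (covered_dupClique hr hrm (Or.inl rfl) (mem_erase.mpr ⟨h1.1, hu⟩)
      (mem_erase.mpr ⟨h1.2, hv⟩)).mono hmono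
  have hue : u ∈ e := by rcases (by omega : u = 1 ∨ u = m + 1) with rfl | rfl <;> assumption
  have hve : v ∈ e := by rcases (by omega : v = 1 ∨ v = m + 1) with rfl | rfl <;> assumption
  exact ⟨e, mem_union_right _ (mem_singleton_self e), hue, hve⟩

lemma isCopyIn_dupClique {F : HG} (hF : Uniform r F) {G : HG} (hG : dupClique m r ⊆ G)
    {φ : ℕ → ℕ} (hinj : Set.InjOn φ (hverts F))
    (hmaps : Set.MapsTo φ (hverts F) (Icc 1 (m + 1)))
    (hsplit : ∀ f ∈ F, ¬ (1 ∈ f.image φ ∧ m + 1 ∈ f.image φ)) :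
    IsCopyIn F (induced G (Icc 1 (m + 1))) :=
  isCopyIn_induced_of_injOn hinj hmaps fun f hf => hG (mem_dupClique
    (image_subset_iff.mpr fun _ hx => hmaps (subset_hverts hf hx))
    (card_image_of_uniform hF hinj hf) (hsplit f hf))

lemma exists_injOn_Icc_not_one_and_succ {F : HG} (hF : Uniform r F) (hrm : r ≤ m)
    (hstruct : (hverts F).card ≤ m ∨ ((hverts F).card = m + 1 ∧ HasDeg1Vertex F)) :
    ∃ φ : ℕ → ℕ, Set.InjOn φ (hverts F) ∧ Set.MapsTo φ (hverts F) (Icc 1 (m + 1)) ∧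
      ∀ f ∈ F, ¬ (1 ∈ f.image φ ∧ m + 1 ∈ f.image φ) := by
  rcases hstruct with hcard | ⟨hcard, hdeg⟩
  · obtain ⟨φ, hinj, hmaps⟩ := exists_injOn_mapsTo (hverts F) (Icc 1 m) (by simpa using hcard)
    refine ⟨φ, hinj, hmaps.mono_right (coe_subset.mpr (Icc_subset_Icc_right m.le_succ)),
      fun f hf ⟨_, hmf⟩ => ?_⟩
    obtain ⟨x, hx, hxm⟩ := mem_image.mp hmf
    have := mem_Icc.mp (hmaps (subset_hverts hf hx))
    omega
  · obtain ⟨v, hv, w, hw, hvw, hvw_not_covered⟩ :=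
      exists_not_covered_of_hasDeg1Vertex hF (by omega) hdeg
    have : 1 < (hverts F).card := one_lt_card.mpr ⟨v, hv, w, hw, hvw⟩
    obtain ⟨φ, hinj, hmaps, hφv, hφw⟩ := exists_injOn_mapsTo_of_eq_of_eq (t := Icc 1 (m + 1))
      (a' := m + 1) (b' := 1) (by simp [hcard]) hv hw hvw (by simp) (by simp) (by omega)
    refine ⟨φ, hinj, hmaps, fun f hf ⟨h1f, hmf⟩ => hvw_not_covered ⟨f, hf, ?_, ?_⟩⟩
    · exact hinj.mem_of_mem_image_finset (subset_hverts hf) hv (hφv ▸ hmf)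
    · exact hinj.mem_of_mem_image_finset (subset_hverts hf) hw (hφw ▸ h1f)

end dupClique

/-- The complete `r`-graph on `[m] = {1,…,m}` with vertex `1`
duplicated into `m+1` plus an edge covering `{1, m+1}` contains a member of
`ℋ^F_{m+1}`. -/
theorem stmt_13 (m r : ℕ) (hr : 2 ≤ r) (hrm : r ≤ m + 1)
    (F : HG) (hF : Uniform r F)
    (hstruct : (hverts F).card ≤ m ∨ ((hverts F).card = m + 1 ∧ HasDeg1Vertex F))
    (e : Finset ℕ) (he : e.card = r) (h1 : 1 ∈ e) (h1' : m + 1 ∈ e) :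
    ContainsHFam F (m + 1)
      (((Finset.Icc 1 m).powersetCard r ∪
          ((Finset.Icc 1 m).powersetCard r |>.filter (fun f => 1 ∈ f)).image
            (fun f => insert (m + 1) (f.erase 1))) ∪ {e}) := by
  show ContainsHFam F (m + 1) (dupClique m r ∪ {e})
  have he_mem : e ∈ dupClique m r ∪ {e} := mem_union_right _ (mem_singleton_self e)
  obtain hrm | rfl := hrm.lt_or_eq
  · obtain ⟨φ, hinj, hmaps, hsplit⟩ :=
      exists_injOn_Icc_not_one_and_succ hF (by omega : r ≤ m) hstruct
    exact ⟨Icc 1 (m + 1), by simp,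
      isCopyIn_dupClique hF subset_union_left hinj hmaps hsplit,
      fun u hu v hv huv => covered_dupClique_union hr (by omega) h1 h1' hu hv huv⟩
  · exact ⟨e, he, isCopyIn_induced_of_mem hF he_mem he (by omega),
      fun u hu v hv _ => ⟨e, he_mem, hu, hv⟩⟩
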